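/- arXiv:2404.15065 — 2 statements merged into one kernel-verified Lean document; each statement's English description precedes it below -/
import Mathlib

section
/- Let M₁ = {C₁ + Σᵢ (Πₖ αₖ^{E₁(k,i)}) G₁ᵢ : αₖ ∈ [-1,1]} ⊂ ℝ^{n×k} and M₂ = {C₂ + Σⱼ (Πₖ αₖ^{E₂(k,j)}) G₂ⱼ : αₖ ∈ [-1,1]} ⊂ ℝ^{k×m} be matrix polynomial zonotopes sharing the same dependent factors α. Then the set {M₁M₂ : M₁ ∈ M₁, M₂ ∈ M₂ evaluated at the same α} equals the matrix polynomial zonotope with center C₁C₂, generators G₁ᵢC₂ (exponents E₁(·,i)), C₁G₂ⱼ (exponents E₂(·,j)), and G₁ᵢG₂ⱼ (exponents E₁(·,i) + E₂(·,j)). -/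
open scoped BigOperators

/-- A matrix polynomial zonotope: the set of matrices C + Σᵢ (Πₖ αₖ^{E i k}) Gᵢ
for dependent factors α ∈ [-1,1]^p. -/
def MatPolyZono {n m p : ℕ} {ι : Type*} [Fintype ι] (C : Matrix (Fin n) (Fin m) ℝ)
    (G : ι → Matrix (Fin n) (Fin m) ℝ) (E : ι → Fin p → ℕ) :
    Set (Matrix (Fin n) (Fin m) ℝ) :=
  { M | ∃ α : Fin p → ℝ, (∀ k, α k ∈ Set.Icc (-1:ℝ) 1) ∧
      M = C + ∑ i, (∏ k, α k ^ E i k) • G i }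

open Finset Matrix

section
variable {R : Type*} [CommSemiring R] {σ : Type*} [Fintype σ]

theorem prod_pow_add (α : σ → R) (e₁ e₂ : σ → ℕ) :
    ∏ k, α k ^ (e₁ + e₂) k = (∏ k, α k ^ e₁ k) * ∏ k, α k ^ e₂ k := by
  simp only [Pi.add_apply, pow_add, prod_mul_distrib]

theorem add_sum_smul_mul_add_sum_smul {l n m ι₁ ι₂ : Type*}
    [Fintype n] [Fintype ι₁] [Fintype ι₂]
    (C₁ : Matrix l n R) (G₁ : ι₁ → Matrix l n R) (E₁ : ι₁ → σ → ℕ)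
    (C₂ : Matrix n m R) (G₂ : ι₂ → Matrix n m R) (E₂ : ι₂ → σ → ℕ) (α : σ → R) :
    (C₁ + ∑ i, (∏ k, α k ^ E₁ i k) • G₁ i) * (C₂ + ∑ j, (∏ k, α k ^ E₂ j k) • G₂ j) =
      C₁ * C₂ + ∑ i : ι₁ ⊕ ι₂ ⊕ ι₁ × ι₂,
        (∏ k, α k ^ Sum.elim E₁ (Sum.elim E₂ fun q => E₁ q.1 + E₂ q.2) i k) •
          Sum.elim (fun i₁ => G₁ i₁ * C₂)
            (Sum.elim (fun i₂ => C₁ * G₂ i₂) fun q => G₁ q.1 * G₂ q.2) i := by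
  simp only [Fintype.sum_sum_type, Fintype.sum_prod_type, Sum.elim_inl, Sum.elim_inr,
    Matrix.add_mul, Matrix.mul_add, Matrix.sum_mul, Matrix.mul_sum, Matrix.smul_mul,
    Matrix.mul_smul, smul_add, smul_sum, smul_smul, sum_add_distrib, prod_pow_add]
  rw [sum_comm (s := univ (α := ι₂))]
  simp only [mul_comm]
  abel

end

/-- The dependency-preserving product of two matrix polynomial zonotopes sharing
the same dependent factors equals the matrix polynomial zonotope with center
C₁C₂ and generators G₁ᵢC₂ (exponents E₁(·,i)), C₁G₂ⱼ (exponents E₂(·,j)), and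
G₁ᵢG₂ⱼ (exponents E₁(·,i) + E₂(·,j)). -/
theorem stmt_4 (n k m p h₁ h₂ : ℕ)
    (C₁ : Matrix (Fin n) (Fin k) ℝ) (G₁ : Fin h₁ → Matrix (Fin n) (Fin k) ℝ)
    (E₁ : Fin h₁ → Fin p → ℕ)
    (C₂ : Matrix (Fin k) (Fin m) ℝ) (G₂ : Fin h₂ → Matrix (Fin k) (Fin m) ℝ)
    (E₂ : Fin h₂ → Fin p → ℕ) :
    { M : Matrix (Fin n) (Fin m) ℝ | ∃ α : Fin p → ℝ,
        (∀ j, α j ∈ Set.Icc (-1:ℝ) 1) ∧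
        M = (C₁ + ∑ i, (∏ j, α j ^ E₁ i j) • G₁ i) *
            (C₂ + ∑ i, (∏ j, α j ^ E₂ i j) • G₂ i) }
    = MatPolyZono (C₁ * C₂)
        (Sum.elim (fun i₁ => G₁ i₁ * C₂)
          (Sum.elim (fun i₂ => C₁ * G₂ i₂)
            (fun q : Fin h₁ × Fin h₂ => G₁ q.1 * G₂ q.2)))
        (Sum.elim E₁
          (Sum.elim E₂ (fun q : Fin h₁ × Fin h₂ => E₁ q.1 + E₂ q.2))) := by
  ext M
  simp only [MatPolyZono, Set.mem_ofPred_eq, add_sum_smul_mul_add_sum_smul]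
end

section
/- Let PZ₁, PZ₂ ⊂ ℝⁿ be polynomial zonotopes sharing dependent factors α ∈ [-1,1]^p, and Q ∈ ℝ^{n×n}. Then the set {x₁ᵀQx₂ : x₁ = PZ₁(α), x₂ = PZ₂(α), α ∈ [-1,1]^p} ⊂ ℝ equals the polynomial zonotope with center c₁ᵀQc₂, generators c₂ᵀQᵀG₁(·,i) with exponents E₁(·,i), c₁ᵀQG₂(·,j) with exponents E₂(·,j), and G₁(·,i)ᵀQG₂(·,j) with exponents E₁(·,i)+E₂(·,j). -/
/-! (x, y) ↦ xᵀQy is bilinear, so expanding it on c₁ + Σᵢ mᵢ(α) G₁ᵢ and c₂ + Σⱼ m'ⱼ(α) G₂ⱼ at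
the same α gives the centre, the two linear generator families and the cross terms
mᵢ(α) m'ⱼ(α) G₁ᵢᵀQG₂ⱼ; a product of monomials in α is the monomial of the summed exponents. -/

open Matrix
open scoped BigOperators

/-- A (vector) polynomial zonotope in ℝⁿ. -/
def PolyZono {n p : ℕ} {ι : Type*} [Fintype ι] (c : Fin n → ℝ)
    (G : ι → Fin n → ℝ) (E : ι → Fin p → ℕ) : Set (Fin n → ℝ) :=
  { x | ∃ α : Fin p → ℝ, (∀ k, α k ∈ Set.Icc (-1:ℝ) 1) ∧
      x = c + ∑ i, (∏ k, α k ^ E i k) • G i }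

/-- Scalar polynomial zonotope (one-dimensional quadratic-map output). -/
def ScalarPolyZono {p : ℕ} {ι : Type*} [Fintype ι] (c : ℝ)
    (G : ι → ℝ) (E : ι → Fin p → ℕ) : Set ℝ :=
  { x | ∃ α : Fin p → ℝ, (∀ k, α k ∈ Set.Icc (-1:ℝ) 1) ∧
      x = c + ∑ i, (∏ k, α k ^ E i k) * G i }

-- Bracketed to the right like the index type `ι ⊕ κ ⊕ ι × κ` of the resulting zonotope.
theorem LinearMap.map_add_sum_smul₂ {R M N P ι κ : Type*} [CommSemiring R]
    [AddCommMonoid M] [AddCommMonoid N] [AddCommMonoid P] [Module R M] [Module R N] [Module R P]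
    [Fintype ι] [Fintype κ] (B : M →ₗ[R] N →ₗ[R] P)
    (c : M) (a : ι → R) (g : ι → M) (d : N) (b : κ → R) (h : κ → N) :
    B (c + ∑ i, a i • g i) (d + ∑ j, b j • h j) =
      B c d + (∑ i, a i • B (g i) d + (∑ j, b j • B c (h j) +
        ∑ q : ι × κ, (a q.1 * b q.2) • B (g q.1) (h q.2))) := by
  simp only [map_add, map_sum, map_smul, LinearMap.add_apply, LinearMap.sum_apply,
    LinearMap.smul_apply, smul_add, Finset.sum_add_distrib, Finset.smul_sum,
    Fintype.sum_prod_type, mul_smul]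
  rw [Finset.sum_comm (f := fun j i => b j • a i • B (g i) (h j))]
  simp only [smul_comm (b _)]
  abel

theorem Finset.prod_pow_add_eq_mul {ι R : Type*} [Fintype ι] [CommMonoid R]
    (α : ι → R) (e f : ι → ℕ) :
    ∏ k, α k ^ (e + f) k = (∏ k, α k ^ e k) * ∏ k, α k ^ f k := by
  simp only [Pi.add_apply, pow_add, Finset.prod_mul_distrib]

/-- The dependency-preserving scalar quadratic map of two polynomial zonotopes
equals the polynomial zonotope with center c₁ᵀQc₂, generators c₂ᵀQᵀG₁ᵢ
(exponents E₁(·,i)), c₁ᵀQG₂ⱼ (exponents E₂(·,j)), and G₁ᵢᵀQG₂ⱼ (exponents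
E₁(·,i)+E₂(·,j)). -/
theorem stmt_6 (n p h₁ h₂ : ℕ) (Q : Matrix (Fin n) (Fin n) ℝ)
    (c₁ : Fin n → ℝ) (G₁ : Fin h₁ → Fin n → ℝ) (E₁ : Fin h₁ → Fin p → ℕ)
    (c₂ : Fin n → ℝ) (G₂ : Fin h₂ → Fin n → ℝ) (E₂ : Fin h₂ → Fin p → ℕ) :
    { r : ℝ | ∃ α : Fin p → ℝ, (∀ k, α k ∈ Set.Icc (-1:ℝ) 1) ∧
        r = (c₁ + ∑ i, (∏ k, α k ^ E₁ i k) • G₁ i) ⬝ᵥ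
            Q.mulVec (c₂ + ∑ i, (∏ k, α k ^ E₂ i k) • G₂ i) }
    = ScalarPolyZono (c₁ ⬝ᵥ Q.mulVec c₂)
        (Sum.elim (fun i₁ => G₁ i₁ ⬝ᵥ Q.mulVec c₂)
          (Sum.elim (fun i₂ => c₁ ⬝ᵥ Q.mulVec (G₂ i₂))
            (fun q : Fin h₁ × Fin h₂ => G₁ q.1 ⬝ᵥ Q.mulVec (G₂ q.2))))
        (Sum.elim E₁
          (Sum.elim E₂ (fun q : Fin h₁ × Fin h₂ => E₁ q.1 + E₂ q.2))) := by
  ext r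
  refine exists_congr fun α => and_congr_right fun _ => ?_
  rw [← toLinearMap₂'_apply', LinearMap.map_add_sum_smul₂]
  simp only [toLinearMap₂'_apply', Fintype.sum_sum_type, Sum.elim_inl, Sum.elim_inr,
    Finset.prod_pow_add_eq_mul, smul_eq_mul]
end
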